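/- Let the signature contain an absorption pair (f, ε_f), a unary symbol h, and constants a and b distinct from ε_f, let y and v be distinct variables, and let σ be the substitution {y ↦ a, v ↦ ε_f}. Then the abstraction set ↑(h(ε_f), σ) is infinite; in particular it contains h(ε_f), h(v), h(f(v,b)), h(f(a,v)), h(f(v,v)), and h(f(v,f(y,a))). -/

import Mathlib

/- Common development: first-order terms, absorption theories, anti-unification
   equations, configurations and the AUnif transformation rules. -/

namespace AbsAU

/-- First-order terms over a set `F` of function symbols, with variables drawn
from the countably infinite set `ℕ`. -/
inductive Tm (F : Type) : Type where
  | var : ℕ → Tm F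
  | app : F → List (Tm F) → Tm F

namespace Tm

variable {F : Type}

/-- Application of a substitution (given as a total map on variables) to a term. -/
def subst (σ : ℕ → Tm F) : Tm F → Tm F
  | var x => σ x
  | app f ts => app f (ts.attach.map fun t => subst σ t.1)
decreasing_by
  have := List.sizeOf_lt_of_mem t.2
  simp only [Tm.app.sizeOf_spec]
  omega

/-- The head of a term: a variable or a function symbol. -/
def head : Tm F → ℕ ⊕ F
  | var x => Sum.inl x
  | app f _ => Sum.inr f

end Tm

/-- `VarIn x t` holds iff the variable `x` occurs in the term `t`. -/
inductive VarIn {F : Type} : ℕ → Tm F → Prop where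
  | var (x : ℕ) : VarIn x (.var x)
  | app {x : ℕ} {t : Tm F} (f : F) {ts : List (Tm F)} :
      t ∈ ts → VarIn x t → VarIn x (.app f ts)

/-- `SymOcc f t` holds iff the function symbol `f` occurs in the term `t`. -/
inductive SymOcc {F : Type} (f : F) : Tm F → Prop where
  | head (ts : List (Tm F)) : SymOcc f (.app f ts)
  | arg {t : Tm F} (g : F) {ts : List (Tm F)} :
      t ∈ ts → SymOcc f t → SymOcc f (.app g ts)

/-- Signature data: an arity for every symbol and the distinguished wild card
constant `⋆`. -/
structure AbsSig (F : Type) where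
  arity : F → ℕ
  star : F
  star_arity : arity star = 0

/-- Arity-respecting (well-formed) terms. -/
inductive WFT {F : Type} (Sg : AbsSig F) : Tm F → Prop where
  | var (x : ℕ) : WFT Sg (.var x)
  | app {f : F} {ts : List (Tm F)} :
      ts.length = Sg.arity f → (∀ t ∈ ts, WFT Sg t) → WFT Sg (.app f ts)

/-- An absorption theory: finitely many pairs `(f, ε_f)` of a binary symbol
together with its absorption constant, all chosen symbols pairwise distinct and
distinct from the wild card. -/
structure AbsTh {F : Type} (Sg : AbsSig F) where
  pairs : Set (F × F)
  finite : pairs.Finite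
  binary : ∀ p ∈ pairs, Sg.arity p.1 = 2
  constZ : ∀ p ∈ pairs, Sg.arity p.2 = 0
  distinct : ∀ p ∈ pairs, ∀ q ∈ pairs, p ≠ q →
      p.1 ≠ q.1 ∧ p.1 ≠ q.2 ∧ p.2 ≠ q.1 ∧ p.2 ≠ q.2
  ne : ∀ p ∈ pairs, p.1 ≠ p.2
  star_ne : ∀ p ∈ pairs, Sg.star ≠ p.1 ∧ Sg.star ≠ p.2

variable {F : Type}

/-- `≈_Abs` : the least congruence on terms containing all substitution
instances of the absorption axioms `f(ε_f, x) ≈ ε_f` and `f(x, ε_f) ≈ ε_f`. -/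
inductive AbsEq {Sg : AbsSig F} (Th : AbsTh Sg) : Tm F → Tm F → Prop where
  | absL {f e : F} (t : Tm F) : (f, e) ∈ Th.pairs →
      AbsEq Th (.app f [.app e [], t]) (.app e [])
  | absR {f e : F} (t : Tm F) : (f, e) ∈ Th.pairs →
      AbsEq Th (.app f [t, .app e []]) (.app e [])
  | refl (t : Tm F) : AbsEq Th t t
  | symm {s t : Tm F} : AbsEq Th s t → AbsEq Th t s
  | trans {s t u : Tm F} : AbsEq Th s t → AbsEq Th t u → AbsEq Th s u
  | congr (f : F) {ss ts : List (Tm F)} :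
      List.Forall₂ (AbsEq Th) ss ts → AbsEq Th (.app f ss) (.app f ts)

/-- The domain of a substitution. -/
def Dom (σ : ℕ → Tm F) : Set ℕ := {x | σ x ≠ .var x}

/-- A substitution proper has a finite domain. -/
def FinDom (σ : ℕ → Tm F) : Prop := (Dom σ).Finite

/-- The variables occurring in the range of a substitution. -/
def Rvar (σ : ℕ → Tm F) : Set ℕ := {y | ∃ x ∈ Dom σ, VarIn y (σ x)}

/-- `r ≲_Abs s` : `r` is more general than `s` modulo the absorption theory. -/
def MoreGen {Sg : AbsSig F} (Th : AbsTh Sg) (r s : Tm F) : Prop :=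
  ∃ σ : ℕ → Tm F, FinDom σ ∧ AbsEq Th (r.subst σ) s

/-- `r` is an `Abs`-generalization of `s` and `t`. -/
def Gen {Sg : AbsSig F} (Th : AbsTh Sg) (r s t : Tm F) : Prop :=
  MoreGen Th r s ∧ MoreGen Th r t

/-- The set of all `Abs`-generalizations of `s` and `t`. -/
def GAbs {Sg : AbsSig F} (Th : AbsTh Sg) (s t : Tm F) : Set (Tm F) :=
  {r | Gen Th r s t}

/-- `M` is a minimal complete set of `Abs`-generalizations of `s` and `t`. -/
def IsMCSG {Sg : AbsSig F} (Th : AbsTh Sg) (M : Set (Tm F)) (s t : Tm F) : Prop :=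
  M ⊆ GAbs Th s t ∧
  (∀ r ∈ GAbs Th s t, ∃ r' ∈ M, MoreGen Th r r') ∧
  (∀ r ∈ M, ∀ r' ∈ M, MoreGen Th r r' → r = r')

/-- `Abs`-normal forms: no absorption constant occurs as an argument of its
absorption symbol. -/
inductive NF {Sg : AbsSig F} (Th : AbsTh Sg) : Tm F → Prop where
  | var (x : ℕ) : NF Th (.var x)
  | app {f : F} {ts : List (Tm F)} :
      (∀ t ∈ ts, NF Th t) →
      (∀ e : F, (f, e) ∈ Th.pairs → Tm.app e [] ∉ ts) →
      NF Th (.app f ts)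

/-- An anti-unification equation (AUE) `lhs ≜_lab rhs`. -/
structure AUE (F : Type) where
  lhs : Tm F
  lab : ℕ
  rhs : Tm F

/-- The labels of a set of AUEs. -/
def labels (W : Set (AUE F)) : Set ℕ := AUE.lab '' W

/-- A set of AUEs is valid if its labels are pairwise distinct. -/
def ValidAUEs (W : Set (AUE F)) : Prop :=
  ∀ a ∈ W, ∀ b ∈ W, a.lab = b.lab → a = b

/-- The wild card, as a term. -/
def starTm (Sg : AbsSig F) : Tm F := .app Sg.star []

/-- A wild AUE has the wild card on one of its sides. -/
def WildAUE (Sg : AbsSig F) (a : AUE F) : Prop :=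
  a.lhs = starTm Sg ∨ a.rhs = starTm Sg

/-- The heads of `s` and `t` form a related absorption pair. -/
def RelatedAbs {Sg : AbsSig F} (Th : AbsTh Sg) (s t : Tm F) : Prop :=
  ∃ f e : F, (f, e) ∈ Th.pairs ∧
    ((s.head = Sum.inr f ∧ t.head = Sum.inr e) ∨
     (s.head = Sum.inr e ∧ t.head = Sum.inr f))

/-- A solved AUE: distinct heads, no related absorption symbols, not wild. -/
def SolvedAUE {Sg : AbsSig F} (Th : AbsTh Sg) (a : AUE F) : Prop :=
  a.lhs.head ≠ a.rhs.head ∧ ¬ RelatedAbs Th a.lhs a.rhs ∧ ¬ WildAUE Sg a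

/-- A proper object term appearing in an AUE of a configuration: in
`Abs`-normal form, arity-respecting, ground, and wild-card free. -/
def GoodTm {Sg : AbsSig F} (Th : AbsTh Sg) (t : Tm F) : Prop :=
  NF Th t ∧ WFT Sg t ∧ (∀ x : ℕ, ¬ VarIn x t) ∧ ¬ SymOcc Sg.star t

/-- A configuration `⟨A; S; T; θ⟩`. -/
structure Config (F : Type) where
  A : Set (AUE F)
  S : Set (AUE F)
  T : Set (AUE F)
  θ : ℕ → Tm F

/-- The defining properties of configurations: `A`, `S`, `T` are (finite) valid
sets of unsolved, solved, resp. wild AUEs over object terms in `Abs`-normal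
form, `θ` is a substitution, (i) the labels of `A`, `S`, `T` and the domain of
`θ` are pairwise disjoint, and (ii) the variables occurring in the range of `θ`
are exactly the labels of `A`, `S` and `T`. -/
structure IsConfig {Sg : AbsSig F} (Th : AbsTh Sg) (C : Config F) : Prop where
  finA : C.A.Finite
  finS : C.S.Finite
  finT : C.T.Finite
  validA : ValidAUEs C.A
  validS : ValidAUEs C.S
  validT : ValidAUEs C.T
  goodA : ∀ a ∈ C.A, GoodTm Th a.lhs ∧ GoodTm Th a.rhs
  goodS : ∀ a ∈ C.S, GoodTm Th a.lhs ∧ GoodTm Th a.rhs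
  solvedS : ∀ a ∈ C.S, SolvedAUE Th a
  wildT : ∀ a ∈ C.T,
      (a.lhs = starTm Sg ∧ GoodTm Th a.rhs) ∨
      (a.rhs = starTm Sg ∧ GoodTm Th a.lhs)
  finDom : FinDom C.θ
  nfθ : ∀ x : ℕ, NF Th (C.θ x) ∧ WFT Sg (C.θ x)
  disjAS : Disjoint (labels C.A) (labels C.S)
  disjAT : Disjoint (labels C.A) (labels C.T)
  disjST : Disjoint (labels C.S) (labels C.T)
  disjAD : Disjoint (labels C.A) (Dom C.θ)
  disjSD : Disjoint (labels C.S) (Dom C.θ)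
  disjTD : Disjoint (labels C.T) (Dom C.θ)
  rvarEq : Rvar C.θ = labels C.A ∪ labels C.S ∪ labels C.T

/-- The substitution `{x ↦ t}`. -/
def single (x : ℕ) (t : Tm F) : ℕ → Tm F :=
  fun z => if z = x then t else .var z

/-- Composition `θ{x ↦ t}` of a substitution with a single binding. -/
def compOne (θ : ℕ → Tm F) (x : ℕ) (t : Tm F) : ℕ → Tm F :=
  fun z => (θ z).subst (single x t)

/-- A variable is fresh for a configuration. -/
def FreshIn (C : Config F) (y : ℕ) : Prop :=
  y ∉ labels C.A ∧ y ∉ labels C.S ∧ y ∉ labels C.T ∧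
  y ∉ Dom C.θ ∧ y ∉ Rvar C.θ

/-- Canonical choice of the next fresh variable for a configuration. -/
noncomputable def nextFresh (C : Config F) : ℕ :=
  sInf {k : ℕ | ∀ m : ℕ, k ≤ m → FreshIn C m}

/-- The set of AUEs `{s₁ ≜_{y₁} t₁, …, sₙ ≜_{yₙ} tₙ}`. -/
def zipAUEs (ss : List (Tm F)) (ys : List ℕ) (ts : List (Tm F)) : Set (AUE F) :=
  {a | ∃ (i : ℕ) (h1 : i < ss.length) (h2 : i < ys.length) (h3 : i < ts.length),
      a = ⟨ss.get ⟨i, h1⟩, ys.get ⟨i, h2⟩, ts.get ⟨i, h3⟩⟩}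

/-- The AUnif transformation rules: Decompose, Solve, the four Expansion rules
for left/right absorption, and Merge. -/
inductive Step {Sg : AbsSig F} (Th : AbsTh Sg) : Config F → Config F → Prop where
  | dec (f : F) (ss ts : List (Tm F)) (x : ℕ) (ys : List ℕ)
      (A S T : Set (AUE F)) (θ : ℕ → Tm F)
      (hlen : ss.length = ts.length)
      (hnotin : (⟨.app f ss, x, .app f ts⟩ : AUE F) ∉ A)
      (hys : ys = (List.range ss.length).map
          (fun i => nextFresh (⟨insert ⟨.app f ss, x, .app f ts⟩ A, S, T, θ⟩ : Config F) + i)) :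
      Step Th ⟨insert ⟨.app f ss, x, .app f ts⟩ A, S, T, θ⟩
        ⟨zipAUEs ss ys ts ∪ A, S, T, compOne θ x (.app f (ys.map Tm.var))⟩
  | sol (a : AUE F) (A S T : Set (AUE F)) (θ : ℕ → Tm F)
      (hhead : a.lhs.head ≠ a.rhs.head)
      (hrel : ¬ RelatedAbs Th a.lhs a.rhs)
      (hnotin : a ∉ A) :
      Step Th ⟨insert a A, S, T, θ⟩ ⟨A, insert a S, T, θ⟩
  | expLA1 (f e : F) (t1 t2 : Tm F) (x y1 y2 : ℕ)
      (A S T : Set (AUE F)) (θ : ℕ → Tm F)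
      (hp : (f, e) ∈ Th.pairs)
      (hnotin : (⟨.app e [], x, .app f [t1, t2]⟩ : AUE F) ∉ A)
      (hy1 : y1 = nextFresh (⟨insert ⟨.app e [], x, .app f [t1, t2]⟩ A, S, T, θ⟩ : Config F))
      (hy2 : y2 = y1 + 1) :
      Step Th ⟨insert ⟨.app e [], x, .app f [t1, t2]⟩ A, S, T, θ⟩
        ⟨insert ⟨.app e [], y1, t1⟩ A, S, insert ⟨starTm Sg, y2, t2⟩ T,
          compOne θ x (.app f [.var y1, .var y2])⟩
  | expLA2 (f e : F) (t1 t2 : Tm F) (x y1 y2 : ℕ)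
      (A S T : Set (AUE F)) (θ : ℕ → Tm F)
      (hp : (f, e) ∈ Th.pairs)
      (hnotin : (⟨.app e [], x, .app f [t1, t2]⟩ : AUE F) ∉ A)
      (hy1 : y1 = nextFresh (⟨insert ⟨.app e [], x, .app f [t1, t2]⟩ A, S, T, θ⟩ : Config F))
      (hy2 : y2 = y1 + 1) :
      Step Th ⟨insert ⟨.app e [], x, .app f [t1, t2]⟩ A, S, T, θ⟩
        ⟨insert ⟨.app e [], y2, t2⟩ A, S, insert ⟨starTm Sg, y1, t1⟩ T,
          compOne θ x (.app f [.var y1, .var y2])⟩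
  | expRA1 (f e : F) (s1 s2 : Tm F) (x y1 y2 : ℕ)
      (A S T : Set (AUE F)) (θ : ℕ → Tm F)
      (hp : (f, e) ∈ Th.pairs)
      (hnotin : (⟨.app f [s1, s2], x, .app e []⟩ : AUE F) ∉ A)
      (hy1 : y1 = nextFresh (⟨insert ⟨.app f [s1, s2], x, .app e []⟩ A, S, T, θ⟩ : Config F))
      (hy2 : y2 = y1 + 1) :
      Step Th ⟨insert ⟨.app f [s1, s2], x, .app e []⟩ A, S, T, θ⟩
        ⟨insert ⟨s1, y1, .app e []⟩ A, S, insert ⟨s2, y2, starTm Sg⟩ T,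
          compOne θ x (.app f [.var y1, .var y2])⟩
  | expRA2 (f e : F) (s1 s2 : Tm F) (x y1 y2 : ℕ)
      (A S T : Set (AUE F)) (θ : ℕ → Tm F)
      (hp : (f, e) ∈ Th.pairs)
      (hnotin : (⟨.app f [s1, s2], x, .app e []⟩ : AUE F) ∉ A)
      (hy1 : y1 = nextFresh (⟨insert ⟨.app f [s1, s2], x, .app e []⟩ A, S, T, θ⟩ : Config F))
      (hy2 : y2 = y1 + 1) :
      Step Th ⟨insert ⟨.app f [s1, s2], x, .app e []⟩ A, S, T, θ⟩
        ⟨insert ⟨s2, y2, .app e []⟩ A, S, insert ⟨s1, y1, starTm Sg⟩ T,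
          compOne θ x (.app f [.var y1, .var y2])⟩
  | mer (s t : Tm F) (x y : ℕ) (S T : Set (AUE F)) (θ : ℕ → Tm F)
      (hxy : x ≠ y)
      (hx : (⟨s, x, t⟩ : AUE F) ∉ S) (hy : (⟨s, y, t⟩ : AUE F) ∉ S) :
      Step Th ⟨∅, insert ⟨s, x, t⟩ (insert ⟨s, y, t⟩ S), T, θ⟩
        ⟨∅, insert ⟨s, y, t⟩ S, T, compOne θ x (.var y)⟩

/-- A final (normal) configuration: no rule applies. -/
def Final {Sg : AbsSig F} (Th : AbsTh Sg) (C : Config F) : Prop :=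
  ∀ C' : Config F, ¬ Step Th C C'

/-- `AUnif(C)`: the set of final configurations reachable from `C`. -/
def AUnifSet {Sg : AbsSig F} (Th : AbsTh Sg) (C : Config F) : Set (Config F) :=
  {C' | Relation.ReflTransGen (Step Th) C C' ∧ Final Th C'}

open Classical in
/-- The left substitution `σ_W` associated with a set of AUEs. -/
noncomputable def sigmaW (W : Set (AUE F)) : ℕ → Tm F :=
  fun y => if h : ∃ a, a ∈ W ∧ a.lab = y then h.choose.lhs else .var y

open Classical in
/-- The right substitution `ρ_W` associated with a set of AUEs. -/
noncomputable def rhoW (W : Set (AUE F)) : ℕ → Tm F :=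
  fun y => if h : ∃ a, a ∈ W ∧ a.lab = y then h.choose.rhs else .var y

/-- The abstraction set `↑(t, σ)`. -/
def absSet {Sg : AbsSig F} (Th : AbsTh Sg) (t : Tm F) (σ : ℕ → Tm F) : Set (Tm F) :=
  {r | AbsEq Th (r.subst σ) t ∧ NF Th r ∧ ∀ x : ℕ, VarIn x r → x ∈ Dom σ}

/-- `Ψ(T, S)`: the set of abstraction substitutions of a configuration with
abstraction `T` and store `S`. -/
def Psi {Sg : AbsSig F} (Th : AbsTh Sg) (T S : Set (AUE F)) : Set (ℕ → Tm F) :=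
  {τ | Dom τ = labels T ∧ ∀ a ∈ T,
      (a.lhs = starTm Sg → τ a.lab ∈ absSet Th a.rhs (rhoW S)) ∧
      (a.rhs = starTm Sg → τ a.lab ∈ absSet Th a.lhs (sigmaW S))}

/-- The initial configuration `⟨{s ≜_x t}; ∅; ∅; ι⟩` with starting label `xst`
and starting substitution `ι = {xst ↦ x}`. -/
def initConfig (s t : Tm F) (x xst : ℕ) : Config F :=
  ⟨{⟨s, x, t⟩}, ∅, ∅, single xst (.var x)⟩

/-- `AUnif(C₀)` is merged: identical solved AUEs in (possibly different) final
stores carry the same label, and equal labels carry identical AUEs. -/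
def Merged {Sg : AbsSig F} (Th : AbsTh Sg) (C0 : Config F) : Prop :=
  ∀ C1 ∈ AUnifSet Th C0, ∀ C2 ∈ AUnifSet Th C0, ∀ a ∈ C1.S, ∀ b ∈ C2.S,
    ((a.lhs = b.lhs ∧ a.rhs = b.rhs) ↔ a.lab = b.lab)

/-- `C_AUnif(s, t)`: all generalizations computed from final configurations of
the initial configuration for `s ≜_x t`, instantiated by abstraction
substitutions. -/
def CAUnif {Sg : AbsSig F} (Th : AbsTh Sg) (s t : Tm F) (x xst : ℕ) : Set (Tm F) :=
  {g | ∃ C' ∈ AUnifSet Th (initConfig s t x xst),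
      ∃ τ ∈ Psi Th C'.T C'.S, g = (C'.θ x).subst τ}

/-- Linear terms: no variable occurs more than once. -/
inductive Linear {F : Type} : Tm F → Prop where
  | var (x : ℕ) : Linear (.var x)
  | app (f : F) {ts : List (Tm F)} :
      (∀ t ∈ ts, Linear t) →
      List.Pairwise (fun s t => ∀ x : ℕ, VarIn x s → ¬ VarIn x t) ts →
      Linear (.app f ts)

/-! Since `σ v = ε_f`, the variable `v` is absorbing under `σ`: `f(v, t)` and `f(t, v)` lie in
`↑(ε_f, σ)` for every normal form `t ≠ ε_f` over `Dom σ`. Iterating, the towers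
`f(v, f(v, …, f(v, b)…))` are pairwise distinct abstractions of `ε_f`, and the unary context `h`
carries them into `↑(h(ε_f), σ)`. -/

namespace Tm

variable {F : Type}

@[simp]
theorem subst_var (σ : ℕ → Tm F) (x : ℕ) : (var x).subst σ = σ x := by
  rw [subst]

@[simp]
theorem subst_app (σ : ℕ → Tm F) (g : F) (ts : List (Tm F)) :
    (app g ts).subst σ = app g (ts.map (subst σ)) := by
  rw [subst]
  simp

end Tm

section AbsorptionNormalForms

variable {F : Type} {Sg : AbsSig F} {Th : AbsTh Sg}

@[simp]
theorem varIn_var_iff {x y : ℕ} : VarIn x (.var y : Tm F) ↔ x = y :=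
  ⟨fun h => by cases h; rfl, fun h => h ▸ .var x⟩

@[simp]
theorem varIn_app_iff {x : ℕ} {g : F} {ts : List (Tm F)} :
    VarIn x (.app g ts) ↔ ∃ t ∈ ts, VarIn x t :=
  ⟨fun h => by cases h with | app _ hmem hx => exact ⟨_, hmem, hx⟩,
   fun ⟨_, hmem, hx⟩ => .app g hmem hx⟩

theorem AbsTh.not_mem_pairs_of_arity_ne_two (Th : AbsTh Sg) {g : F}
    (hg : Sg.arity g ≠ 2) (e : F) : (g, e) ∉ Th.pairs :=
  fun hp => hg (Th.binary _ hp)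

theorem AbsTh.eq_of_mem_pairs {f e e' : F} (he : (f, e) ∈ Th.pairs)
    (he' : (f, e') ∈ Th.pairs) : e = e' := by
  by_contra hne
  exact (Th.distinct _ he _ he' (by simpa using hne)).1 rfl

theorem NF.const (c : F) : NF Th (.app c []) :=
  .app (by simp) (by simp)

theorem NF.unary {g : F} (hg : Sg.arity g ≠ 2) {t : Tm F} (ht : NF Th t) :
    NF Th (.app g [t]) :=
  .app (by simpa using ht) fun e he => absurd he (Th.not_mem_pairs_of_arity_ne_two hg e)

theorem NF.absorbing {f e : F} (hfe : (f, e) ∈ Th.pairs) {t₁ t₂ : Tm F}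
    (h₁ : NF Th t₁) (h₂ : NF Th t₂) (h₁e : t₁ ≠ .app e []) (h₂e : t₂ ≠ .app e []) :
    NF Th (.app f [t₁, t₂]) := by
  refine .app (by simp [h₁, h₂]) fun e' he' => ?_
  obtain rfl := Th.eq_of_mem_pairs hfe he'
  simp [h₁e.symm, h₂e.symm]

end AbsorptionNormalForms

section AbstractionSet

variable {F : Type} {Sg : AbsSig F} {Th : AbsTh Sg} {σ : ℕ → Tm F}

theorem var_mem_absSet {x : ℕ} (hx : x ∈ Dom σ) : .var x ∈ absSet Th (σ x) σ :=
  ⟨by simpa using .refl _, .var x, by simp [hx]⟩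

theorem const_mem_absSet (c : F) : .app c [] ∈ absSet Th (.app c []) σ :=
  ⟨by simpa using .refl _, .const c, by simp⟩

theorem unary_mem_absSet {g : F} (hg : Sg.arity g ≠ 2) {s t : Tm F}
    (ht : t ∈ absSet Th s σ) : .app g [t] ∈ absSet Th (.app g [s]) σ :=
  ⟨by simpa using .congr g (.cons ht.1 .nil), .unary hg ht.2.1, by simpa using ht.2.2⟩

theorem absorbing_left_mem_absSet {f e : F} (hfe : (f, e) ∈ Th.pairs) {t₁ t₂ : Tm F}
    (h₁ : t₁ ∈ absSet Th (.app e []) σ) (h₂ : NF Th t₂) (hdom₂ : ∀ x, VarIn x t₂ → x ∈ Dom σ)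
    (h₁e : t₁ ≠ .app e []) (h₂e : t₂ ≠ .app e []) :
    .app f [t₁, t₂] ∈ absSet Th (.app e []) σ := by
  refine ⟨?_, .absorbing hfe h₁.2.1 h₂ h₁e h₂e, ?_⟩
  · simpa using .trans (.congr f (.cons h₁.1 (.cons (.refl _) .nil))) (.absL _ hfe)
  · simpa using fun x => Or.rec (h₁.2.2 x) (hdom₂ x)

theorem absorbing_right_mem_absSet {f e : F} (hfe : (f, e) ∈ Th.pairs) {t₁ t₂ : Tm F}
    (h₁ : NF Th t₁) (hdom₁ : ∀ x, VarIn x t₁ → x ∈ Dom σ) (h₂ : t₂ ∈ absSet Th (.app e []) σ)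
    (h₁e : t₁ ≠ .app e []) (h₂e : t₂ ≠ .app e []) :
    .app f [t₁, t₂] ∈ absSet Th (.app e []) σ := by
  refine ⟨?_, .absorbing hfe h₁ h₂.2.1 h₁e h₂e, ?_⟩
  · simpa using .trans (.congr f (.cons (.refl _) (.cons h₂.1 .nil))) (.absR _ hfe)
  · simpa using fun x => Or.rec (hdom₁ x) (h₂.2.2 x)

end AbstractionSet

section LeftTower

variable {F : Type}

def leftTower (f : F) (v : ℕ) (b : Tm F) : ℕ → Tm F
  | 0 => b
  | n + 1 => .app f [.var v, leftTower f v b n]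

theorem leftTower_injective (f : F) (v : ℕ) (b : Tm F) :
    Function.Injective (leftTower f v b) := by
  refine (strictMono_nat_of_lt_succ fun n => ?_).injective.of_comp (f := sizeOf)
  simp only [Function.comp, leftTower, Tm.app.sizeOf_spec, List.cons.sizeOf_spec]
  omega

variable {Sg : AbsSig F} {Th : AbsTh Sg} {σ : ℕ → Tm F}

theorem leftTower_succ_mem_absSet {f e : F} (hfe : (f, e) ∈ Th.pairs) {v : ℕ}
    (hv : σ v = .app e []) {b : F} (hbe : b ≠ e) (n : ℕ) :
    leftTower f v (.app b []) (n + 1) ∈ absSet Th (.app e []) σ := by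
  have hvmem : .var v ∈ absSet Th (.app e []) σ := hv ▸ var_mem_absSet (by simp [Dom, hv])
  induction n with
  | zero =>
    exact absorbing_left_mem_absSet hfe hvmem (.const b) (by simp [leftTower]) (by simp)
      (by simpa [leftTower])
  | succ n ih =>
    refine absorbing_left_mem_absSet hfe hvmem ih.2.1 ih.2.2 (by simp) ?_
    simp [leftTower, Th.ne _ hfe]

end LeftTower

theorem abstraction_set_infinite_general {F : Type} {Sg : AbsSig F} (Th : AbsTh Sg)
    (f e h a b : F)
    (hfe : (f, e) ∈ Th.pairs)
    (hh : Sg.arity h = 1)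
    (hae : a ≠ e) (hbe : b ≠ e)
    (y v : ℕ) (hyv : y ≠ v)
    (σ : ℕ → Tm F)
    (hσ : σ = fun z => if z = y then Tm.app a []
                       else if z = v then Tm.app e [] else Tm.var z) :
    (absSet Th (Tm.app h [Tm.app e []]) σ).Infinite ∧
    Tm.app h [Tm.app e []] ∈ absSet Th (Tm.app h [Tm.app e []]) σ ∧
    Tm.app h [Tm.var v] ∈ absSet Th (Tm.app h [Tm.app e []]) σ ∧
    Tm.app h [Tm.app f [Tm.var v, Tm.app b []]] ∈ absSet Th (Tm.app h [Tm.app e []]) σ ∧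
    Tm.app h [Tm.app f [Tm.app a [], Tm.var v]] ∈ absSet Th (Tm.app h [Tm.app e []]) σ ∧
    Tm.app h [Tm.app f [Tm.var v, Tm.var v]] ∈ absSet Th (Tm.app h [Tm.app e []]) σ ∧
    Tm.app h [Tm.app f [Tm.var v, Tm.app f [Tm.var y, Tm.app a []]]]
      ∈ absSet Th (Tm.app h [Tm.app e []]) σ := by
  have hσv : σ v = .app e [] := by simp [hσ, hyv.symm]
  have hyDom : y ∈ Dom σ := by simp [Dom, hσ]
  have hvDom : v ∈ Dom σ := by simp [Dom, hσv]
  have hv : .var v ∈ absSet Th (.app e []) σ := hσv ▸ var_mem_absSet hvDom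
  have hh₂ : Sg.arity h ≠ 2 := by omega
  have hfy : .app f [.var y, .app a []] ≠ (.app e [] : Tm F) := by simp [Th.ne _ hfe]
  refine ⟨?_, unary_mem_absSet hh₂ (const_mem_absSet e), unary_mem_absSet hh₂ hv,
    unary_mem_absSet hh₂ ?_, unary_mem_absSet hh₂ ?_, unary_mem_absSet hh₂ ?_,
    unary_mem_absSet hh₂ ?_⟩
  · refine Set.infinite_of_injective_forall_mem
      (f := fun n => .app h [leftTower f v (.app b []) (n + 1)]) (fun n m hnm => ?_)
      fun n => unary_mem_absSet hh₂ (leftTower_succ_mem_absSet hfe hσv hbe n)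
    exact Nat.succ_injective (leftTower_injective f v _ (by simpa using hnm))
  · exact absorbing_left_mem_absSet hfe hv (.const b) (by simp) (by simp) (by simpa)
  · exact absorbing_right_mem_absSet hfe (.const a) (by simp) hv (by simpa) (by simp)
  · exact absorbing_left_mem_absSet hfe hv (.var v) (by simp [hvDom]) (by simp) (by simp)
  · exact absorbing_left_mem_absSet hfe hv (.absorbing hfe (.var y) (.const a) (by simp) (by simpa))
      (by simp [hyDom]) (by simp) hfy

/-- Example 4: with an absorption pair `(f, ε_f)`, a unary
symbol `h`, constants `a`, `b` different from `ε_f`, distinct variables `y`,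
`v`, and the substitution `σ = {y ↦ a, v ↦ ε_f}`, the abstraction set
`↑(h(ε_f), σ)` is infinite; in particular it contains `h(ε_f)`, `h(v)`,
`h(f(v,b))`, `h(f(a,v))`, `h(f(v,v))` and `h(f(v,f(y,a)))`. -/
theorem abstraction_set_infinite {F : Type} {Sg : AbsSig F} (Th : AbsTh Sg)
    (f e h a b : F)
    (hfe : (f, e) ∈ Th.pairs)
    (hh : Sg.arity h = 1) (ha : Sg.arity a = 0) (hb : Sg.arity b = 0)
    (hae : a ≠ e) (hbe : b ≠ e)
    (y v : ℕ) (hyv : y ≠ v)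
    (σ : ℕ → Tm F)
    (hσ : σ = fun z => if z = y then Tm.app a []
                       else if z = v then Tm.app e [] else Tm.var z) :
    (absSet Th (Tm.app h [Tm.app e []]) σ).Infinite ∧
    Tm.app h [Tm.app e []] ∈ absSet Th (Tm.app h [Tm.app e []]) σ ∧
    Tm.app h [Tm.var v] ∈ absSet Th (Tm.app h [Tm.app e []]) σ ∧
    Tm.app h [Tm.app f [Tm.var v, Tm.app b []]] ∈ absSet Th (Tm.app h [Tm.app e []]) σ ∧
    Tm.app h [Tm.app f [Tm.app a [], Tm.var v]] ∈ absSet Th (Tm.app h [Tm.app e []]) σ ∧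
    Tm.app h [Tm.app f [Tm.var v, Tm.var v]] ∈ absSet Th (Tm.app h [Tm.app e []]) σ ∧
    Tm.app h [Tm.app f [Tm.var v, Tm.app f [Tm.var y, Tm.app a []]]]
      ∈ absSet Th (Tm.app h [Tm.app e []]) σ :=
  abstraction_set_infinite_general Th f e h a b hfe hh hae hbe y v hyv σ hσ

end AbsAU
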